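/- arXiv:1403.4407 — 3 statements merged into one kernel-verified Lean document; each statement's English description precedes it below -/
import Mathlib

section
/- Let D, E₁, E₂ be propositional formulas such that GL proves D ↔ [(E₁ ∧ ¬□(D → E₁)) ⊻ (E₂ ∧ ¬□(D ∧ ¬E₁ → E₂))], where ⊻ is exclusive disjunction. Then GL proves ¬D. -/
/-!
If the test were on the second day, then `D ∧ ¬E₁` would yield the second-day disjunct and
hence `E₂`. That implication is a theorem, so by necessitation `□(D ∧ ¬E₁ → E₂)` holds and the
second-day disjunct `E₂ ∧ ¬□(D ∧ ¬E₁ → E₂)` is refutable. Now `D` yields the first-day disjunct,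
so `D → E₁` is a theorem, and by necessitation the first-day disjunct is refutable as well.
With both disjuncts refuted, so is `D`. The argument already works in the modal logic K.
-/

/-- Modal formulas. -/
inductive Fm : Type
  | atom : ℕ → Fm
  | bot : Fm
  | imp : Fm → Fm → Fm
  | box : Fm → Fm

namespace Fm

def neg (A : Fm) : Fm := imp A bot
def disj (A B : Fm) : Fm := imp (neg A) B
def conj (A B : Fm) : Fm := neg (imp A (neg B))
def iff' (A B : Fm) : Fm := conj (imp A B) (imp B A)
/-- Exclusive disjunction. -/
def xor' (A B : Fm) : Fm := conj (disj A B) (neg (conj A B))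

end Fm

open Fm

/-- Provability in the Gödel–Löb provability logic GLProv: normal modal logic
(propositional tautologies, axiom K, modus ponens, necessitation) together with
axiom 4 and the Löb axiom scheme `□(□A → A) → □A`. -/
inductive GLProv : Fm → Prop
  | ax1 (A B : Fm) : GLProv (imp A (imp B A))
  | ax2 (A B C : Fm) : GLProv (imp (imp A (imp B C)) (imp (imp A B) (imp A C)))
  | ax3 (A B : Fm) : GLProv (imp (imp (neg A) (neg B)) (imp B A))
  | axK (A B : Fm) : GLProv (imp (box (imp A B)) (imp (box A) (box B)))
  | ax4 (A : Fm) : GLProv (imp (box A) (box (box A)))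
  | lob (A : Fm) : GLProv (imp (box (imp (box A) A)) (box A))
  | mp {A B : Fm} : GLProv (imp A B) → GLProv A → GLProv B
  | nec {A : Fm} : GLProv A → GLProv (box A)

theorem GLProv.imp_self (A : Fm) : GLProv (imp A A) :=
  .mp (.mp (.ax2 A (imp A A) A) (.ax1 A (imp A A))) (.ax1 A A)

theorem GLProv.bot_imp (A : Fm) : GLProv (imp bot A) :=
  .mp (.ax3 A bot) (.mp (.ax1 (neg bot) (neg A)) (.imp_self bot))

/-- Derivability from a list of hypotheses. Necessitation enters only through `thm`, i.e. is
applied to theorems and never to hypotheses, so the deduction theorem holds. -/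
inductive GLDerives : List Fm → Fm → Prop
  | hyp {Γ A} : A ∈ Γ → GLDerives Γ A
  | thm {Γ A} : GLProv A → GLDerives Γ A
  | mp {Γ A B} : GLDerives Γ (imp A B) → GLDerives Γ A → GLDerives Γ B

namespace GLDerives

variable {Γ : List Fm} {A B : Fm}

theorem head : GLDerives (A :: Γ) A := hyp List.mem_cons_self

theorem deduction (h : GLDerives (A :: Γ) B) : GLDerives Γ (imp A B) := by
  induction h with
  | hyp hm =>
    rcases List.mem_cons.mp hm with rfl | hm
    · exact thm (.imp_self _)
    · exact mp (thm (.ax1 _ _)) (hyp hm)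
  | thm h => exact mp (thm (.ax1 _ _)) (thm h)
  | mp _ _ ihAB ihA => exact mp (mp (thm (.ax2 _ _ _)) ihAB) ihA

theorem cons (h : GLDerives Γ A) : GLDerives (B :: Γ) A := by
  induction h with
  | hyp hm => exact hyp (List.mem_cons_of_mem _ hm)
  | thm h => exact thm h
  | mp _ _ ihAB ihA => exact mp ihAB ihA

theorem absurd (hnA : GLDerives Γ (neg A)) (hA : GLDerives Γ A) : GLDerives Γ bot := mp hnA hA

theorem efq (h : GLDerives Γ bot) : GLDerives Γ A := mp (thm (.bot_imp A)) h

theorem of_neg_neg (h : GLDerives Γ (neg (neg A))) : GLDerives Γ A :=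
  have neg_imp_neg_neg_neg : GLDerives Γ (imp (neg A) (neg (neg (neg A)))) :=
    deduction <| deduction <| absurd head (hyp (by simp))
  mp (mp (thm (.ax3 A (neg (neg A)))) neg_imp_neg_neg_neg) h

theorem by_contra (h : GLDerives (neg A :: Γ) bot) : GLDerives Γ A :=
  of_neg_neg (deduction h)

theorem conj_left (h : GLDerives Γ (conj A B)) : GLDerives Γ A :=
  by_contra <| absurd h.cons <| deduction <| efq <| absurd (hyp (by simp)) head

theorem conj_right (h : GLDerives Γ (conj A B)) : GLDerives Γ B :=
  by_contra <| absurd h.cons <| deduction (hyp (by simp))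

theorem neg_conj_of_neg_left (h : GLDerives Γ (neg A)) : GLDerives Γ (neg (conj A B)) :=
  deduction <| absurd h.cons (conj_left head)

theorem resolve_left (h : GLDerives Γ (disj A B)) (hnA : GLDerives Γ (neg A)) :
    GLDerives Γ B :=
  mp h hnA

theorem resolve_right (h : GLDerives Γ (disj A B)) (hnB : GLDerives Γ (neg B)) :
    GLDerives Γ A :=
  by_contra <| absurd hnB.cons (h.cons.resolve_left head)

end GLDerives

theorem GLProv.of_derives {A : Fm} (h : GLDerives [] A) : GLProv A := by
  generalize hΓ : ([] : List Fm) = Γ at h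
  induction h with
  | hyp hm => subst hΓ; simp at hm
  | thm h => exact h
  | mp _ _ ihAB ihA => exact .mp ihAB ihA

theorem GLProv.imp_of_iff {A B : Fm} (h : GLProv (iff' A B)) : GLProv (imp A B) :=
  .of_derives (.conj_left (.thm h))

theorem GLProv.neg_conj_neg_box (E : Fm) {A : Fm} (h : GLProv A) :
    GLProv (neg (conj E (neg (box A)))) :=
  .of_derives <| .deduction <| .absurd (.conj_right .head) (.thm (.nec h))

/-- Fitch's self-referential two-day Surprise Test announcement is refutable in
GL: if `D ↔ [(E₁ ∧ ¬□(D → E₁)) ⊻ (E₂ ∧ ¬□(D ∧ ¬E₁ → E₂))]` is provable in GL,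
then GL proves `¬D`. -/
theorem surprise_test_fitch_refutable (D E₁ E₂ : Fm)
    (h : GLProv (iff' D (xor' (conj E₁ (neg (box (imp D E₁))))
        (conj E₂ (neg (box (imp (conj D (neg E₁)) E₂))))))) :
    GLProv (neg D) := by
  set S₁ := conj E₁ (neg (box (imp D E₁)))
  set S₂ := conj E₂ (neg (box (imp (conj D (neg E₁)) E₂)))
  have announcement {Γ : List Fm} (hD : GLDerives Γ D) : GLDerives Γ (disj S₁ S₂) :=
    .conj_left (.mp (.thm h.imp_of_iff) hD)
  have second_day : GLProv (imp (conj D (neg E₁)) E₂) :=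
    .of_derives <| .deduction <| .conj_left <|
      (announcement (.conj_left .head)).resolve_left (.neg_conj_of_neg_left (.conj_right .head))
  have not_S₂ : GLProv (neg S₂) := .neg_conj_neg_box E₂ second_day
  have first_day : GLProv (imp D E₁) :=
    .of_derives <| .deduction <| .conj_left <| (announcement .head).resolve_right (.thm not_S₂)
  have not_S₁ : GLProv (neg S₁) := .neg_conj_neg_box E₁ first_day
  exact .of_derives <| .deduction <|
    .absurd (.thm not_S₂) ((announcement .head).resolve_left (.thm not_S₁))
end

section
/- Let D, E₁, E₂ be propositional formulas such that GL proves D ↔ [(E₁ ∧ ¬□(D → E₁)) ⊻ (E₂ ∧ ¬□(D → E₂))]. Then GL proves ¬D. -/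
open Fm

theorem GLProv.box_imp_box {A B : Fm} (h : GLProv (imp A B)) : GLProv (imp (box A) (box B)) :=
  .mp (.axK A B) (.nec h)

theorem GLProv.of_box_imp_self {A : Fm} (h : GLProv (imp (box A) A)) : GLProv A :=
  .mp h (.mp (.lob A) (.nec h))

/-- Hypotheses are used only through modus ponens, never necessitated, so the deduction theorem
`GLProvFrom.deduction` holds. -/
inductive GLProvFrom : List Fm → Fm → Prop
  | hyp {Γ A} : A ∈ Γ → GLProvFrom Γ A
  | thm {Γ A} : GLProv A → GLProvFrom Γ A
  | mp {Γ A B} : GLProvFrom Γ (imp A B) → GLProvFrom Γ A → GLProvFrom Γ B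

namespace GLProvFrom

variable {Γ : List Fm} {A B : Fm}

theorem head : GLProvFrom (A :: Γ) A :=
  .hyp List.mem_cons_self

theorem cons (h : GLProvFrom Γ A) : GLProvFrom (B :: Γ) A := by
  induction h with
  | hyp hm => exact .hyp (List.mem_cons_of_mem _ hm)
  | thm ht => exact .thm ht
  | mp _ _ ih₁ ih₂ => exact .mp ih₁ ih₂

theorem deduction (h : GLProvFrom (A :: Γ) B) : GLProvFrom Γ (imp A B) := by
  induction h with
  | hyp hm =>
    rcases List.mem_cons.mp hm with rfl | hm
    · exact .thm (GLProv.imp_self _)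
    · exact .mp (.thm (.ax1 _ _)) (.hyp hm)
  | thm ht => exact .mp (.thm (.ax1 _ _)) (.thm ht)
  | mp _ _ ih₁ ih₂ => exact .mp (.mp (.thm (.ax2 _ _ _)) ih₁) ih₂

theorem toGLProv (h : GLProvFrom [] A) : GLProv A := by
  induction h with
  | hyp hm => simp at hm
  | thm ht => exact ht
  | mp _ _ ih₁ ih₂ => exact .mp ih₁ ih₂

theorem of_bot (h : GLProvFrom Γ bot) : GLProvFrom Γ A :=
  .mp (.thm (GLProv.bot_imp A)) h

theorem not_not_intro (h : GLProvFrom Γ A) : GLProvFrom Γ (neg (neg A)) :=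
  deduction (.mp head h.cons)

theorem of_not_not (h : GLProvFrom Γ (neg (neg A))) : GLProvFrom Γ A :=
  .mp (.mp (.thm (.ax3 A (neg (neg A)))) (deduction (not_not_intro head))) h

theorem mt (hAB : GLProvFrom Γ (imp A B)) (hB : GLProvFrom Γ (neg B)) : GLProvFrom Γ (neg A) :=
  deduction (.mp hB.cons (.mp hAB.cons head))

theorem conj_left (h : GLProvFrom Γ (conj A B)) : GLProvFrom Γ A :=
  of_not_not <| deduction <| .mp h.cons <| deduction <| of_bot (.mp head.cons head)

theorem not_conj_not (h : GLProvFrom Γ A) : GLProvFrom Γ (neg (conj B (neg A))) :=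
  deduction (.mp head (.mp (.thm (.ax1 _ B)) (not_not_intro h.cons)))

theorem not_xor (hA : GLProvFrom Γ (neg A)) (hB : GLProvFrom Γ (neg B)) :
    GLProvFrom Γ (neg (xor' A B)) :=
  deduction (.mp hB.cons (.mp head.conj_left hA.cons))

end GLProvFrom

theorem GLProv.box_not_imp_box_imp (D E : Fm) : GLProv (imp (box (neg D)) (box (imp D E))) :=
  GLProv.box_imp_box <| GLProvFrom.toGLProv <| GLProvFrom.deduction <| GLProvFrom.deduction <|
    GLProvFrom.of_bot (.mp GLProvFrom.head.cons GLProvFrom.head)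

/-- Kripke's refutation of Fitch's attempted resolution of the Surprise Test
Paradox: if `D ↔ [(E₁ ∧ ¬□(D → E₁)) ⊻ (E₂ ∧ ¬□(D → E₂))]` is provable in GL,
then GL proves `¬D`. -/
theorem surprise_test_kripke_refutable (D E₁ E₂ : Fm)
    (h : GLProv (iff' D (xor' (conj E₁ (neg (box (imp D E₁))))
        (conj E₂ (neg (box (imp D E₂))))))) :
    GLProv (neg D) := by
  refine GLProv.of_box_imp_self (GLProvFrom.toGLProv (GLProvFrom.deduction ?_))
  have refutes (E : Fm) : GLProvFrom [box (neg D)] (neg (conj E (neg (box (imp D E))))) :=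
    GLProvFrom.not_conj_not (.mp (.thm (GLProv.box_not_imp_box_imp D E)) GLProvFrom.head)
  exact GLProvFrom.mt (GLProvFrom.thm h).conj_left (GLProvFrom.not_xor (refutes E₁) (refutes E₂))
end

section
/- Let D, E₁, E₂ be propositional formulas such that GL proves D ↔ [□D → ((E₁ ∧ ¬□(D → E₁)) ⊻ (E₂ ∧ ¬□(D ∧ ¬E₁ → E₂)))]. Then GL proves D ↔ ¬□D, and consequently GL does not prove D (assuming GL is consistent). -/
open Fm

/-!
Under the assumption `□D` the announcement collapses. Propositionally, `□D` and the fixed point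
give `D ∧ ¬E₁ → E₂`, so by axioms 4 and K, `□D` gives `□(D ∧ ¬E₁ → E₂)`. With this, `□D` gives
`D → E₁`, hence also `□(D → E₁)`. Now both members of the exclusive disjunction are refuted under
`□D`, and the fixed point reduces to `D ↔ ¬□D`. If GL proved `D`, it would prove `□D` by
necessitation and `¬□D` by this equivalence.

The propositional steps are tautologies once boxed formulas are read as atoms, and every such
tautology is a theorem by Kalmár's argument.
-/

namespace Fm

def impList (Γ : List Fm) (B : Fm) : Fm := Γ.foldr imp B

def eval (v : Fm → Bool) : Fm → Bool
  | atom n => v (atom n)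
  | bot => false
  | imp A B => !eval v A || eval v B
  | box A => v (box A)

def atoms : Fm → List Fm
  | atom n => [atom n]
  | bot => []
  | imp A B => atoms A ++ atoms B
  | box A => [box A]

def literal (v : Fm → Bool) (p : Fm) : Fm := if v p then p else neg p

variable (v : Fm → Bool) (A B : Fm)

@[simp] theorem eval_bot : eval v bot = false := rfl
@[simp] theorem eval_imp : eval v (imp A B) = (!eval v A || eval v B) := rfl
@[simp] theorem eval_box : eval v (box A) = v (box A) := rfl
@[simp] theorem eval_neg : eval v (neg A) = !eval v A := by simp [neg]
@[simp] theorem eval_conj : eval v (conj A B) = (eval v A && eval v B) := by simp [conj]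
@[simp] theorem eval_iff' : eval v (iff' A B) = (eval v A == eval v B) := by
  simp only [iff', eval_conj, eval_imp]; cases eval v A <;> cases eval v B <;> rfl
@[simp] theorem eval_xor' : eval v (xor' A B) = xor (eval v A) (eval v B) := by
  simp only [xor', disj, eval_conj, eval_imp, eval_neg]; cases eval v A <;> cases eval v B <;> rfl

end Fm

namespace GLProv

variable {A B C : Fm}

theorem imp_self_s9 (A : Fm) : GLProv (imp A A) :=
  mp (mp (ax2 A (imp A A) A) (ax1 A (imp A A))) (ax1 A A)

theorem imp_mono_right (X : Fm) (h : GLProv (imp A B)) :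
    GLProv (imp (imp X A) (imp X B)) :=
  mp (ax2 X A B) (mp (ax1 (imp A B) X) h)

theorem imp_trans (h₁ : GLProv (imp A B)) (h₂ : GLProv (imp B C)) : GLProv (imp A C) :=
  mp (imp_mono_right A h₂) h₁

theorem impList_mp (Γ : List Fm) (A B : Fm) :
    GLProv (imp (impList Γ (imp A B)) (imp (impList Γ A) (impList Γ B))) := by
  induction Γ with
  | nil => exact imp_self_s9 _
  | cons X Γ ih => exact imp_trans (imp_mono_right X ih) (ax2 X _ _)

theorem imp_impList (Γ : List Fm) (A : Fm) : GLProv (imp A (impList Γ A)) := by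
  induction Γ with
  | nil => exact imp_self_s9 A
  | cons X Γ ih => exact imp_trans ih (ax1 _ X)

end GLProv

def GLDerives_s9 (Γ : List Fm) (A : Fm) : Prop := GLProv (impList Γ A)

namespace GLDerives_s9

variable {Γ Δ : List Fm} {A B : Fm}

theorem mp (h₁ : GLDerives_s9 Γ (imp A B)) (h₂ : GLDerives_s9 Γ A) : GLDerives_s9 Γ B :=
  GLProv.mp (GLProv.mp (GLProv.impList_mp Γ A B) h₁) h₂

theorem of_glProv (h : GLProv A) : GLDerives_s9 Γ A :=
  GLProv.mp (GLProv.imp_impList Γ A) h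

theorem hyp (h : A ∈ Γ) : GLDerives_s9 Γ A := by
  induction Γ with
  | nil => simp at h
  | cons X Γ ih =>
    rcases List.mem_cons.mp h with rfl | h
    · exact GLProv.imp_impList Γ A
    · exact GLProv.mp (GLProv.ax1 _ X) (ih h)

theorem detach (h : GLDerives_s9 Δ (impList Γ A)) (hΓ : ∀ B ∈ Γ, GLDerives_s9 Δ B) :
    GLDerives_s9 Δ A := by
  induction Γ with
  | nil => exact h
  | cons X Γ ih =>
    exact ih (mp h (hΓ X List.mem_cons_self)) fun B hB => hΓ B (List.mem_cons_of_mem X hB)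

theorem mono (h : GLDerives_s9 Γ A) (hΓΔ : Γ ⊆ Δ) : GLDerives_s9 Δ A :=
  detach (of_glProv h) fun _ hB => hyp (hΓΔ hB)

end GLDerives_s9

namespace GLProv

theorem bot_imp_s9 (A : Fm) : GLProv (imp bot A) :=
  mp (ax3 A bot) (mp (ax1 (imp bot bot) (neg A)) (imp_self_s9 bot))

theorem not_imp_imp (A B : Fm) : GLProv (imp (neg A) (imp A B)) :=
  show GLDerives_s9 [neg A, A] B from
    .mp (.of_glProv (bot_imp_s9 B)) (.mp (A := A) (.hyp (by simp [neg])) (.hyp (by simp [neg])))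

theorem imp_not_imp_not_imp (A B : Fm) : GLProv (imp A (imp (neg B) (neg (imp A B)))) :=
  show GLDerives_s9 [A, neg B, imp A B] bot from
    .mp (A := B) (.hyp (by simp [neg])) (.mp (A := A) (.hyp (by simp [neg])) (.hyp (by simp [neg])))

theorem imp_not_not (A : Fm) : GLProv (imp A (neg (neg A))) :=
  show GLDerives_s9 [A, neg A] bot from .mp (A := A) (.hyp (by simp [neg])) (.hyp (by simp [neg]))

theorem not_not_imp (A : Fm) : GLProv (imp (neg (neg A)) A) :=
  mp (ax3 A (neg (neg A))) (imp_not_not (neg A))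

theorem of_imp_of_not_imp {p : Fm} (h₁ : GLProv (imp p C)) (h₂ : GLProv (imp (neg p) C)) :
    GLProv C := by
  have hp : GLDerives_s9 [neg C, p] bot :=
    .mp (A := C) (.hyp (by simp [neg])) (.mp (.of_glProv h₁) (.hyp (by simp [neg])))
  have hnp : GLDerives_s9 [neg C, neg p] bot :=
    .mp (A := C) (.hyp (by simp [neg])) (.mp (.of_glProv h₂) (.hyp (by simp [neg])))
  exact mp (not_not_imp C) (GLDerives_s9.mp hnp hp : GLDerives_s9 [neg C] bot)

end GLProv

namespace GLDerives_s9

theorem kalmar (v : Fm → Bool) (A : Fm) :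
    GLDerives_s9 ((atoms A).map (literal v)) (if eval v A then A else neg A) := by
  induction A with
  | atom _ | bot | box _ => exact GLProv.imp_self_s9 _
  | imp A B ihA ihB =>
    have hA := ihA.mono (Δ := (atoms (imp A B)).map (literal v)) (by simp [atoms])
    have hB := ihB.mono (Δ := (atoms (imp A B)).map (literal v)) (by simp [atoms])
    cases hvA : eval v A
    · simp only [hvA, Bool.false_eq_true, ↓reduceIte, eval, Bool.not_false, Bool.true_or] at hA ⊢
      exact .mp (.of_glProv (GLProv.not_imp_imp A B)) hA
    cases hvB : eval v B
    · simp only [hvA, hvB, ↓reduceIte, Bool.false_eq_true, eval, Bool.not_true, Bool.or_self]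
        at hA hB ⊢
      exact .mp (.mp (.of_glProv (GLProv.imp_not_imp_not_imp A B)) hA) hB
    · simp only [hvB, ↓reduceIte, eval, Bool.or_true] at hB ⊢
      exact .mp (.of_glProv (GLProv.ax1 B A)) hB

end GLDerives_s9

open Classical in
theorem GLProv.of_forall_derives_literals (A : Fm) (L : List Fm) (hL : L.Nodup)
    (h : ∀ v : Fm → Bool, GLDerives_s9 (L.map (literal v)) A) : GLProv A := by
  induction L with
  | nil => exact h fun _ => true
  | cons p L ih =>
    obtain ⟨hpL, hL⟩ := List.nodup_cons.mp hL
    refine ih hL fun v => ?_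
    have hmap (b : Bool) : L.map (literal (Function.update v p b)) = L.map (literal v) :=
      List.map_congr_left fun q hq => by
        rw [literal, literal, Function.update_of_ne (ne_of_mem_of_not_mem hq hpL)]
    have hp := h (Function.update v p true)
    have hnp := h (Function.update v p false)
    simp only [List.map_cons, hmap, literal, Function.update_self] at hp hnp
    exact GLProv.of_imp_of_not_imp hp hnp

open Classical in
theorem GLProv.of_tautology {A : Fm} (h : ∀ v, eval v A = true) : GLProv A :=
  of_forall_derives_literals A _ (atoms A).nodup_dedup fun v => by
    simpa [h v] using (GLDerives_s9.kalmar v A).mono fun _ => by simp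

theorem GLProv.imp_box_of_box_imp {A B : Fm} (h : GLProv (imp (box A) B)) :
    GLProv (imp (box A) (box B)) :=
  imp_trans (ax4 A) (mp (axK _ _) (nec h))

/-- Fitch's Gödelian version of the Surprise Test announcement: if
`D ↔ [□D → ((E₁ ∧ ¬□(D → E₁)) ⊻ (E₂ ∧ ¬□(D ∧ ¬E₁ → E₂)))]` is provable in GL,
then GL proves `D ↔ ¬□D`; consequently, if GL is consistent then GL does not
prove `D`. -/
theorem surprise_test_goedel_sentence (D E₁ E₂ : Fm)
    (h : GLProv (iff' D (imp (box D) (xor' (conj E₁ (neg (box (imp D E₁))))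
        (conj E₂ (neg (box (imp (conj D (neg E₁)) E₂)))))))) :
    GLProv (iff' D (neg (box D))) ∧ (¬ GLProv bot → ¬ GLProv D) := by
  have hE₂ : GLProv (imp (box D) (box (imp (conj D (neg E₁)) E₂))) :=
    .imp_box_of_box_imp <| .mp (.of_tautology ?_) h
  have hE₁ : GLProv (imp (box D) (box (imp D E₁))) :=
    .imp_box_of_box_imp <| .mp (.mp (.of_tautology ?_) h) hE₂
  have hD : GLProv (iff' D (neg (box D))) := .mp (.mp (.mp (.of_tautology ?_) h) hE₂) hE₁
  refine ⟨hD, fun hcon hD' => hcon <| .mp (.mp (.mp (.of_tautology ?_) hD) hD') (.nec hD')⟩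
  all_goals
    intro v
    simp only [eval_imp, eval_iff', eval_xor', eval_conj, eval_neg, eval_box, eval_bot]
    grind
end
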